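/- arXiv:1703.04698 — 2 statements merged into one kernel-verified Lean document; each statement's English description precedes it below -/
import Mathlib

section
/- If the real 3×3 symmetric matrix B is negative definite and for every unit vector q with ⟨q,b⟩ > 0 the quantity −⟨q,b⟩/⟨q,Bq⟩ is at most 1, then the closed unit ball in ℝ³ is invariant under the flow of dq/dt = b + Bq + u(t) × q: if ‖q(0)‖ ≤ 1 then ‖q(t)‖ ≤ 1 for all t ≥ 0. -/
/-!
Along a trajectory, `d‖q‖²/dt = 2 (⟨q, b⟩ + ⟨q, Bq⟩)`, the rotation term `u × q` being orthogonal
to `q`. For `‖q‖ = r ≥ 1` the chimney condition applied to `q / r` gives `r ⟨q, b⟩ ≤ -⟨q, Bq⟩`,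
and `-⟨q, Bq⟩ > 0`, so the derivative is `≤ 0` whenever `‖q‖ ≥ 1`. A comparison argument then
keeps `‖q‖²` below `1`.
-/

open Matrix

theorem le_of_hasDerivAt_nonpos_of_le {f f' : ℝ → ℝ} {a c : ℝ}
    (hf : ∀ t, HasDerivAt f (f' t) t) (hf' : ∀ t, c ≤ f t → f' t ≤ 0) (ha : f a ≤ c)
    {t : ℝ} (ht : a ≤ t) : f t ≤ c := by
  -- compare with the strictly increasing barriers `c + ε (s - a)`
  have hbarrier : ∀ ε > 0, f t ≤ c + ε * (t - a) := by
    intro ε hε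
    refine image_le_of_deriv_right_lt_deriv_boundary' (B := fun s => c + ε * (s - a))
      (B' := fun _ => ε)
      (fun s _ => (hf s).continuousAt.continuousWithinAt) (fun s _ => (hf s).hasDerivWithinAt)
      (by simpa using ha) (by fun_prop) (fun s _ => ?_) (fun s hs_mem hs => ?_) ⟨ht, le_rfl⟩
    · simpa using (((hasDerivAt_id s).sub_const a).const_mul ε).const_add c |>.hasDerivWithinAt
    · have hcs : c ≤ f s := by nlinarith [mul_nonneg hε.le (sub_nonneg.mpr hs_mem.1)]
      linarith [hf' s hcs]
  have hlim : Filter.Tendsto (fun ε => c + ε * (t - a)) (nhdsWithin 0 (Set.Ioi 0)) (nhds c) := by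
    have : Continuous fun ε : ℝ => c + ε * (t - a) := by fun_prop
    simpa using (this.tendsto 0).mono_left nhdsWithin_le_nhds
  exact ge_of_tendsto hlim (eventually_nhdsWithin_of_forall hbarrier)

theorem hasDerivAt_sum_sq {ι : Type*} [Fintype ι] {q : ℝ → ι → ℝ} {q' : ι → ℝ} {t : ℝ}
    (hq : HasDerivAt q q' t) : HasDerivAt (fun s => ∑ i, q s i ^ 2) (2 * (q t ⬝ᵥ q')) t := by
  refine (HasDerivAt.fun_sum (u := Finset.univ) fun i _ =>
    (hasDerivAt_pi.mp hq i).fun_pow 2).congr_deriv ?_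
  simp only [dotProduct, Finset.mul_sum]
  exact Finset.sum_congr rfl fun i _ => by ring

theorem dotProduct_mulVec_neg_of_posDef_neg {n : Type*} [Fintype n] {B : Matrix n n ℝ}
    (hB : (-B).PosDef) {x : n → ℝ} (hx : x ≠ 0) : x ⬝ᵥ B *ᵥ x < 0 := by
  simpa [neg_mulVec] using hB.dotProduct_mulVec_pos hx

theorem dotProduct_add_dotProduct_mulVec_nonpos {n : Type*} [Fintype n] {b : n → ℝ}
    {B : Matrix n n ℝ} (hB : (-B).PosDef)
    (hchimney : ∀ e : n → ℝ, e ⬝ᵥ e = 1 → 0 < e ⬝ᵥ b → -(e ⬝ᵥ b) / (e ⬝ᵥ B *ᵥ e) ≤ 1)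
    {x : n → ℝ} (hx : 1 ≤ x ⬝ᵥ x) : x ⬝ᵥ b + x ⬝ᵥ B *ᵥ x ≤ 0 := by
  have hx0 : x ≠ 0 := by rintro rfl; simp at hx; linarith
  have hQ := dotProduct_mulVec_neg_of_posDef_neg hB hx0
  rcases le_or_gt (x ⬝ᵥ b) 0 with hP | hP
  · linarith
  set P := x ⬝ᵥ b
  set Q := x ⬝ᵥ B *ᵥ x
  set r := √(x ⬝ᵥ x)
  have hr2 : r ^ 2 = x ⬝ᵥ x := Real.sq_sqrt (by linarith)
  have hr1 : 1 ≤ r := Real.one_le_sqrt.mpr hx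
  have hr : 0 < r := by linarith
  have hb_unit : (r⁻¹ • x) ⬝ᵥ b = r⁻¹ * P := by rw [smul_dotProduct, smul_eq_mul]
  have hB_unit : (r⁻¹ • x) ⬝ᵥ B *ᵥ (r⁻¹ • x) = r⁻¹ ^ 2 * Q := by
    rw [mulVec_smul, smul_dotProduct, dotProduct_smul, smul_eq_mul, smul_eq_mul]; ring
  have hchim := hchimney (r⁻¹ • x)
    (by rw [smul_dotProduct, dotProduct_smul, smul_eq_mul, smul_eq_mul, ← hr2]; field_simp)
    (by rw [hb_unit]; positivity)
  rw [hb_unit, hB_unit, div_le_one_of_neg (mul_neg_of_pos_of_neg (by positivity) hQ)] at hchim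
  have hQP : Q ≤ -(r * P) := by
    have := mul_le_mul_of_nonneg_left hchim (sq_nonneg r)
    field_simp at this
    linarith
  linarith [mul_le_mul_of_nonneg_right hr1 hP.le]

theorem unit_ball_invariant_general (b : Fin 3 → ℝ) (B : Matrix (Fin 3) (Fin 3) ℝ)
    (hBneg : (-B).PosDef)
    (hchimney : ∀ q : Fin 3 → ℝ, (∑ i, q i ^ 2) = 1 → 0 < ∑ i, q i * b i →
      -(∑ i, q i * b i) / (∑ i, q i * B.mulVec q i) ≤ 1)
    (u : ℝ → Fin 3 → ℝ)
    (q : ℝ → Fin 3 → ℝ)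
    (hq : ∀ t, HasDerivAt q (b + B.mulVec (q t) + crossProduct (u t) (q t)) t)
    (h0 : ∑ i, q 0 i ^ 2 ≤ 1) :
    ∀ t ≥ (0 : ℝ), ∑ i, q t i ^ 2 ≤ 1 := by
  have hsum_sq : ∀ x : Fin 3 → ℝ, ∑ i, x i ^ 2 = x ⬝ᵥ x := fun x => by simp [dotProduct, sq]
  have hderiv : ∀ t, HasDerivAt (fun s => ∑ i, q s i ^ 2)
      (2 * (q t ⬝ᵥ b + q t ⬝ᵥ B *ᵥ q t)) t := fun t => by
    simpa only [dotProduct_add, dot_cross_self, add_zero] using hasDerivAt_sum_sq (hq t)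
  refine fun t ht => le_of_hasDerivAt_nonpos_of_le hderiv (fun s hs => ?_) h0 ht
  have := dotProduct_add_dotProduct_mulVec_nonpos hBneg
    (fun e he => hchimney e (by rwa [hsum_sq])) (by rwa [← hsum_sq])
  linarith

/-- Invariance of the closed unit ball for the Bloch equation q' = b + Bq + u×q. -/
theorem unit_ball_invariant (b : Fin 3 → ℝ) (B : Matrix (Fin 3) (Fin 3) ℝ)
    (hBsymm : B.IsSymm) (hBneg : (-B).PosDef)
    (hchimney : ∀ q : Fin 3 → ℝ, (∑ i, q i ^ 2) = 1 → 0 < ∑ i, q i * b i →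
      -(∑ i, q i * b i) / (∑ i, q i * B.mulVec q i) ≤ 1)
    (u : ℝ → Fin 3 → ℝ) (hu : Continuous u)
    (q : ℝ → Fin 3 → ℝ)
    (hq : ∀ t, HasDerivAt q (b + B.mulVec (q t) + crossProduct (u t) (q t)) t)
    (h0 : ∑ i, q 0 i ^ 2 ≤ 1) :
    ∀ t ≥ (0 : ℝ), ∑ i, q t i ^ 2 ≤ 1 :=
  unit_ball_invariant_general b B hBneg hchimney u q hq h0
end

section
/- Let f(q) = ⟨q, b + Bq⟩ with B symmetric negative definite and b ≠ 0. Any maximizer q_apogee of ‖q‖ over the ellipsoid M = {q ≠ 0 : f(q) = 0} satisfies ‖q_apogee‖ = max over unit vectors v of (−⟨v,b⟩/⟨v,Bv⟩), and this maximum is positive. -/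
/-!
Every nonzero zero `q` of `f q = q ⬝ᵥ (b + B *ᵥ q)` has the form `r • v` with `v = q / ‖q‖` a unit
vector and `r = ‖q‖ = -(v ⬝ᵥ b) / (v ⬝ᵥ B *ᵥ v)`, since `f (r • v) = r (v ⬝ᵥ b + r v ⬝ᵥ B *ᵥ v)`.
Conversely, for every unit `v` on which this ratio is positive, its multiple of `v` is a nonzero
zero of `f`, so the ratio is bounded by the maximal norm on `M`, and it attains that norm at
`qa / ‖qa‖`. Negative definiteness of `B` keeps the denominators away from zero.
-/

open Matrix

section RayParametrization

variable {ι : Type*} [Fintype ι]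

lemma dotProduct_self_pos_of_ne_zero {v : ι → ℝ} (hv : v ≠ 0) : 0 < v ⬝ᵥ v :=
  (dotProduct_star_self_nonneg v).lt_of_ne' (dotProduct_self_eq_zero.not.2 hv)

lemma sum_sq_eq_dotProduct_self (v : ι → ℝ) : ∑ i, v i ^ 2 = v ⬝ᵥ v := by
  simp only [dotProduct, sq]

lemma dotProduct_mulVec_neg_of_posDef_neg_s14 {B : Matrix ι ι ℝ} (hB : (-B).PosDef) {v : ι → ℝ}
    (hv : v ≠ 0) : v ⬝ᵥ B *ᵥ v < 0 := by
  simpa [neg_mulVec] using hB.dotProduct_mulVec_pos hv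

lemma sqrt_dotProduct_self_smul (r : ℝ) (v : ι → ℝ) :
    √((r • v) ⬝ᵥ (r • v)) = |r| * √(v ⬝ᵥ v) := by
  rw [smul_dotProduct, dotProduct_smul, smul_eq_mul, smul_eq_mul, ← mul_assoc, ← sq,
    Real.sqrt_mul (sq_nonneg r), Real.sqrt_sq_eq_abs]

variable (b : ι → ℝ) (B : Matrix ι ι ℝ)

lemma smul_dotProduct_add_mulVec_smul (r : ℝ) (v : ι → ℝ) :
    (r • v) ⬝ᵥ (b + B *ᵥ (r • v)) = r * (v ⬝ᵥ b + r * (v ⬝ᵥ B *ᵥ v)) := by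
  simp only [mulVec_smul, dotProduct_add, smul_dotProduct, dotProduct_smul, smul_eq_mul]
  ring

noncomputable def rayRoot (v : ι → ℝ) : ℝ := -(v ⬝ᵥ b) / (v ⬝ᵥ B *ᵥ v)

lemma rayRoot_smul_dotProduct_add_mulVec {v : ι → ℝ} (hv : v ⬝ᵥ B *ᵥ v ≠ 0) :
    (rayRoot b B v • v) ⬝ᵥ (b + B *ᵥ (rayRoot b B v • v)) = 0 := by
  rw [smul_dotProduct_add_mulVec_smul, rayRoot, div_mul_cancel₀ _ hv]
  ring

lemma rayRoot_smul_of_dotProduct_add_mulVec_eq_zero {q : ι → ℝ}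
    (hq : q ⬝ᵥ (b + B *ᵥ q) = 0) (hqB : q ⬝ᵥ B *ᵥ q ≠ 0) {c : ℝ} (hc : c ≠ 0) :
    rayRoot b B (c • q) = c⁻¹ := by
  have hqb : q ⬝ᵥ b = -(q ⬝ᵥ B *ᵥ q) := by
    rw [dotProduct_add] at hq
    linarith
  simp only [rayRoot, mulVec_smul, smul_dotProduct, dotProduct_smul, smul_eq_mul, hqb]
  field_simp

theorem isGreatest_rayRoot (hB : (-B).PosDef) {qa : ι → ℝ}
    (hqa0 : qa ≠ 0) (hqa : qa ⬝ᵥ (b + B *ᵥ qa) = 0)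
    (hmax : ∀ q, q ≠ 0 → q ⬝ᵥ (b + B *ᵥ q) = 0 → √(q ⬝ᵥ q) ≤ √(qa ⬝ᵥ qa)) :
    IsGreatest {r | ∃ v : ι → ℝ, v ⬝ᵥ v = 1 ∧ r = rayRoot b B v} √(qa ⬝ᵥ qa) := by
  have hn : 0 < √(qa ⬝ᵥ qa) := Real.sqrt_pos.2 (dotProduct_self_pos_of_ne_zero hqa0)
  refine ⟨⟨(√(qa ⬝ᵥ qa))⁻¹ • qa, ?_, ?_⟩, ?_⟩
  · rw [smul_dotProduct, dotProduct_smul, smul_eq_mul, smul_eq_mul, ← mul_assoc, ← sq,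
      inv_pow, Real.sq_sqrt (dotProduct_self_pos_of_ne_zero hqa0).le,
      inv_mul_cancel₀ (dotProduct_self_pos_of_ne_zero hqa0).ne']
  · rw [rayRoot_smul_of_dotProduct_add_mulVec_eq_zero b B hqa
      (dotProduct_mulVec_neg_of_posDef_neg_s14 hB hqa0).ne (inv_ne_zero hn.ne'), inv_inv]
  · rintro r ⟨v, hv1, rfl⟩
    rcases le_or_gt (rayRoot b B v) 0 with hr | hr
    · exact hr.trans hn.le
    have hv0 : v ≠ 0 := by rintro rfl; simp at hv1
    have hrv := hmax _ (smul_ne_zero hr.ne' hv0) (rayRoot_smul_dotProduct_add_mulVec b B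
      (dotProduct_mulVec_neg_of_posDef_neg_s14 hB hv0).ne)
    rwa [sqrt_dotProduct_self_smul, hv1, Real.sqrt_one, mul_one, abs_of_pos hr] at hrv

end RayParametrization

theorem apogee_norm_general (b : Fin 3 → ℝ)
    (B : Matrix (Fin 3) (Fin 3) ℝ) (hBneg : (-B).PosDef)
    (M : Set (Fin 3 → ℝ))
    (hM : M = {q | q ≠ 0 ∧ ∑ i, q i * (b + B.mulVec q) i = 0})
    (qa : Fin 3 → ℝ) (hqaM : qa ∈ M)
    (hqamax : ∀ q ∈ M, Real.sqrt (∑ i, q i ^ 2) ≤ Real.sqrt (∑ i, qa i ^ 2)) :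
    IsGreatest {r : ℝ | ∃ v : Fin 3 → ℝ, (∑ i, v i ^ 2) = 1 ∧
        r = -(∑ i, v i * b i) / (∑ i, v i * B.mulVec v i)}
      (Real.sqrt (∑ i, qa i ^ 2)) ∧
    0 < Real.sqrt (∑ i, qa i ^ 2) := by
  subst hM
  obtain ⟨hqa0, hqa⟩ := hqaM
  simp only [sum_sq_eq_dotProduct_self] at hqamax ⊢
  refine ⟨isGreatest_rayRoot b B hBneg hqa0 hqa fun q hq0 hq => hqamax q ⟨hq0, hq⟩,
    Real.sqrt_pos.2 (dotProduct_self_pos_of_ne_zero hqa0)⟩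

/-- A maximizer of the norm over the ellipsoid M = {q ≠ 0 : f(q) = 0} has norm
equal to the maximum over unit vectors v of −⟨v,b⟩/⟨v,Bv⟩, and this is positive. -/
theorem apogee_norm (b : Fin 3 → ℝ) (hb : b ≠ 0)
    (B : Matrix (Fin 3) (Fin 3) ℝ) (hBsymm : B.IsSymm) (hBneg : (-B).PosDef)
    (M : Set (Fin 3 → ℝ))
    (hM : M = {q | q ≠ 0 ∧ ∑ i, q i * (b + B.mulVec q) i = 0})
    (qa : Fin 3 → ℝ) (hqaM : qa ∈ M)
    (hqamax : ∀ q ∈ M, Real.sqrt (∑ i, q i ^ 2) ≤ Real.sqrt (∑ i, qa i ^ 2)) :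
    IsGreatest {r : ℝ | ∃ v : Fin 3 → ℝ, (∑ i, v i ^ 2) = 1 ∧
        r = -(∑ i, v i * b i) / (∑ i, v i * B.mulVec v i)}
      (Real.sqrt (∑ i, qa i ^ 2)) ∧
    0 < Real.sqrt (∑ i, qa i ^ 2) :=
  apogee_norm_general b B hBneg M hM qa hqaM hqamax
end
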